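/- Let d ≥ 1, s ≥ 1, N ≥ 1 be integers, let x_0, …, x_{N−1} ∈ ℝ^d, and let f : ℝ^d → ℂ be of class C^{2s} with D^α f integrable for every multi-index α with |α| ≤ 2s. Set ε = min{N^{-1/d}, 1/d} and, for η > 0, define L_{≥η} = (1/N) ∑_{j=0}^{N−1} ∫_{‖ξ‖ ≥ η} e^{2πi x_j · ξ} e^{-π ε² ‖ξ‖²} f̂(ξ) dξ. Then there exists a constant C > 0 depending only on d and s such that for all η > 0, |L_{≥η}| ≤ C (∑_{|α| ≤ 2s} ‖D^α f‖_{L¹(ℝ^d)}) · max{N, d^d} · η^{-2s}. -/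

import Mathlib

open MeasureTheory Filter Real

/-- The Fourier transform `f̂(ξ) = ∫_{ℝ^d} e^{-2πi x·ξ} f(x) dx` of `f : ℝ^d → ℂ`. -/
noncomputable def FT {d : ℕ} (f : EuclideanSpace ℝ (Fin d) → ℂ)
    (ξ : EuclideanSpace ℝ (Fin d)) : ℂ :=
  ∫ x : EuclideanSpace ℝ (Fin d),
    Complex.exp ((-2 * π * Complex.I) * ((inner ℝ x ξ : ℝ) : ℂ)) * f x

/-- The partial derivative `∂_{x_i} f` of `f : ℝ^d → ℂ`. -/
noncomputable def pderiv' {d : ℕ} (i : Fin d) (f : EuclideanSpace ℝ (Fin d) → ℂ) :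
    EuclideanSpace ℝ (Fin d) → ℂ :=
  fun x => fderiv ℝ f x (EuclideanSpace.single i 1)

/-- The multi-index derivative `D^α f = ∂^{α_1}_{x_1} ⋯ ∂^{α_d}_{x_d} f` of `f : ℝ^d → ℂ`. -/
noncomputable def mderiv {d : ℕ} (α : Fin d → ℕ) (f : EuclideanSpace ℝ (Fin d) → ℂ) :
    EuclideanSpace ℝ (Fin d) → ℂ :=
  (List.finRange d).foldr (fun i g => (pderiv' i)^[α i] g) f

/-- The (finite) set of multi-indices `α` on `ℝ^d` with `|α| ≤ M`. -/
def mIdx (d M : ℕ) : Finset (Fin d → ℕ) :=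
  (Fintype.piFinset fun _ : Fin d => Finset.range (M + 1)).filter
    fun α => (∑ i, α i) ≤ M

/-- The paper's Gaussian regularization scale `ε = min {N^{-1/d}, 1/d}`. -/
noncomputable def regScale (d N : ℕ) : ℝ :=
  min ((N : ℝ) ^ (-(1 : ℝ) / (d : ℝ))) (1 / (d : ℝ))

/-! On `‖ξ‖ ≥ η` some coordinate has `ξ_i² ≥ ‖ξ‖² / d`. Integrating by parts `2s` times in
that direction gives `(2π|ξ_i|)^{2s} |f̂(ξ)| ≤ ‖∂_i^{2s} f‖₁`, hence
`|f̂(ξ)| ≤ d^s (∑_{|α| ≤ 2s} ‖D^α f‖₁) η^{-2s}` on the integration domain. The phase has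
modulus one, so each integral is at most this bound times the Gaussian mass
`∫ e^{-π ε² ‖ξ‖²} dξ = ε^{-d} = max {N, d^d}`, and averaging over the data keeps the bound. -/

open scoped FourierTransform RealInnerProductSpace

theorem List.foldr_iterate_piSingle {ι X : Type*} [DecidableEq ι] (T : ι → X → X) (i : ι)
    (k : ℕ) (x : X) (l : List ι) :
    l.foldr (fun t y ↦ (T t)^[(Pi.single i k : ι → ℕ) t] y) x = (T i)^[k * l.count i] x := by
  induction l with
  | nil => simp
  | cons t l ih =>
    rcases eq_or_ne t i with rfl | hti
    · simp [ih, mul_add, add_comm, Function.iterate_add_apply]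
    · simp [ih, hti]

theorem mderiv_piSingle {d : ℕ} (i : Fin d) (k : ℕ) (f : EuclideanSpace ℝ (Fin d) → ℂ) :
    mderiv (Pi.single i k) f = (pderiv' i)^[k] f := by
  rw [mderiv, List.foldr_iterate_piSingle,
    List.count_eq_one_of_mem (List.nodup_finRange d) (List.mem_finRange i), mul_one]

theorem piSingle_mem_mIdx {d : ℕ} (i : Fin d) (M : ℕ) : Pi.single i M ∈ mIdx d M := by
  simp only [mIdx, Finset.mem_filter, Fintype.mem_piFinset, Finset.sum_pi_single',
    Finset.mem_univ, if_true, le_refl, and_true]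
  intro t
  rcases eq_or_ne t i with rfl | hti <;> simp [*]

theorem ContDiff.pderiv' {d n : ℕ} {f : EuclideanSpace ℝ (Fin d) → ℂ} (i : Fin d)
    (hf : ContDiff ℝ (n + 1 : ℕ) f) : ContDiff ℝ n (pderiv' i f) :=
  (hf.fderiv_right (by norm_cast)).clm_apply contDiff_const

theorem FT_eq_fourier {d : ℕ} (f : EuclideanSpace ℝ (Fin d) → ℂ) : FT f = 𝓕 f := by
  ext ξ
  rw [Real.fourier_eq', FT]
  congr 1 with x
  rw [smul_eq_mul]
  push_cast
  ring_nf

theorem Real.fourier_fderiv_apply {V E : Type*} [NormedAddCommGroup V] [InnerProductSpace ℝ V]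
    [FiniteDimensional ℝ V] [MeasurableSpace V] [BorelSpace V]
    [NormedAddCommGroup E] [NormedSpace ℂ E] {f : V → E} {v : V}
    (hf : Integrable f) (h'f : Differentiable ℝ f) (hf' : Integrable fun x ↦ fderiv ℝ f x v)
    (w : V) :
    𝓕 (fun x ↦ fderiv ℝ f x v) w = (2 * π * Complex.I * ⟪v, w⟫) • 𝓕 f w := by
  let e (x : V) : ℂ := 𝐞 (-⟪x, w⟫)
  have he (x : V) : fderiv ℝ e x v = -2 * π * Complex.I * ⟪v, w⟫ * e x :=
    fderiv_fourierChar_neg_bilinear_left_apply (innerSL ℝ) x v w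
  have hef : Integrable fun x ↦ e x • f x := (fourierIntegral_convergent_iff w).2 hf
  simp only [Real.fourier_eq, Circle.smul_def, ← integral_smul]
  change ∫ x, e x • fderiv ℝ f x v = ∫ x, (2 * π * Complex.I * ⟪v, w⟫) • e x • f x
  -- integration by parts along `v` alone: the full `fderiv ℝ f` need not be integrable
  rw [integral_smul_fderiv_eq_neg_fderiv_smul_of_integrable, ← integral_neg]
  · simp only [he, smul_smul, ← neg_smul]
    congr 1 with x
    ring_nf
  · simpa only [he, smul_smul] using (hef.smul (-2 * π * Complex.I * ⟪v, w⟫ : ℂ) :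
      Integrable fun x ↦ (-2 * π * Complex.I * ⟪v, w⟫ : ℂ) • e x • f x)
  · exact (fourierIntegral_convergent_iff w).2 hf'
  · exact hef
  · exact fun x _ ↦ (differentiable_fourierChar_neg_bilinear_left (innerSL ℝ) w).differentiableAt
  · exact fun x _ ↦ h'f x

theorem fourier_iterate_pderiv' {d : ℕ} (i : Fin d) (k : ℕ) {f : EuclideanSpace ℝ (Fin d) → ℂ}
    (hf : ContDiff ℝ k f) (hint : ∀ j ≤ k, Integrable ((pderiv' i)^[j] f))
    (ξ : EuclideanSpace ℝ (Fin d)) :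
    𝓕 ((pderiv' i)^[k] f) ξ = (2 * π * Complex.I * ξ i) ^ k * 𝓕 f ξ := by
  induction k generalizing f with
  | zero => simp
  | succ k ih =>
    have hstep : 𝓕 (pderiv' i f) ξ = 2 * π * Complex.I * ξ i * 𝓕 f ξ := by
      rw [show pderiv' i f = fun x ↦ fderiv ℝ f x (EuclideanSpace.single i 1) from rfl,
        Real.fourier_fderiv_apply (f := f) (hint 0 (by omega))
        (hf.differentiable (by norm_cast)) (hint 1 (by omega))]
      simp [EuclideanSpace.inner_single_left]
    rw [Function.iterate_succ_apply, ih (hf.pderiv' i)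
      (fun j hj ↦ Function.iterate_succ_apply (pderiv' i) j f ▸ hint (j + 1) (by omega)),
      hstep, pow_succ]
    ring

theorem pow_abs_mul_norm_fourier_le_integral_norm_iterate_pderiv' {d : ℕ} (i : Fin d) (k : ℕ)
    {f : EuclideanSpace ℝ (Fin d) → ℂ} (hf : ContDiff ℝ k f)
    (hint : ∀ j ≤ k, Integrable ((pderiv' i)^[j] f)) (ξ : EuclideanSpace ℝ (Fin d)) :
    (2 * π * |ξ i|) ^ k * ‖𝓕 f ξ‖ ≤ ∫ x, ‖(pderiv' i)^[k] f x‖ := by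
  have hnorm : ‖𝓕 ((pderiv' i)^[k] f) ξ‖ = (2 * π * |ξ i|) ^ k * ‖𝓕 f ξ‖ := by
    rw [fourier_iterate_pderiv' i k hf hint, norm_mul, norm_pow]
    simp [abs_of_pos pi_pos]
  exact hnorm ▸ VectorFourier.norm_fourierIntegral_le_integral_norm _ _ _ _ ξ

theorem EuclideanSpace.exists_sq_norm_le_card_mul_sq {ι : Type*} [Fintype ι] [Nonempty ι]
    (ξ : EuclideanSpace ℝ ι) : ∃ i, ‖ξ‖ ^ 2 ≤ Fintype.card ι * ξ i ^ 2 := by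
  obtain ⟨i, -, hi⟩ := Finset.exists_max_image Finset.univ (fun j ↦ ξ j ^ 2) Finset.univ_nonempty
  refine ⟨i, ?_⟩
  rw [EuclideanSpace.norm_sq_eq]
  simp only [Real.norm_eq_abs, sq_abs]
  calc ∑ j, ξ j ^ 2 ≤ ∑ _j : ι, ξ i ^ 2 := Finset.sum_le_sum fun j _ ↦ hi j (Finset.mem_univ j)
    _ = Fintype.card ι * ξ i ^ 2 := by simp

theorem pow_norm_mul_norm_fourier_le {d s : ℕ} (hd : 0 < d) {f : EuclideanSpace ℝ (Fin d) → ℂ}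
    (hf : ContDiff ℝ (2 * s : ℕ) f) (hint : ∀ i, ∀ j ≤ 2 * s, Integrable ((pderiv' i)^[j] f))
    {S : ℝ} (hS : ∀ i, ∫ x, ‖(pderiv' i)^[2 * s] f x‖ ≤ S) (ξ : EuclideanSpace ℝ (Fin d)) :
    ‖ξ‖ ^ (2 * s) * ‖𝓕 f ξ‖ ≤ d ^ s * S := by
  have : Nonempty (Fin d) := ⟨⟨0, hd⟩⟩
  obtain ⟨i, hi⟩ := EuclideanSpace.exists_sq_norm_le_card_mul_sq ξ
  rw [Fintype.card_fin] at hi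
  have hcoord : ‖ξ‖ ^ (2 * s) ≤ d ^ s * (2 * π * |ξ i|) ^ (2 * s) :=
    calc ‖ξ‖ ^ (2 * s) = (‖ξ‖ ^ 2) ^ s := pow_mul _ _ _
      _ ≤ (d * ξ i ^ 2) ^ s := by gcongr
      _ = d ^ s * |ξ i| ^ (2 * s) := by rw [mul_pow, pow_mul, sq_abs]
      _ ≤ d ^ s * (2 * π * |ξ i|) ^ (2 * s) := by
        gcongr
        nlinarith [pi_gt_three, abs_nonneg (ξ i)]
  calc ‖ξ‖ ^ (2 * s) * ‖𝓕 f ξ‖ ≤ d ^ s * ((2 * π * |ξ i|) ^ (2 * s) * ‖𝓕 f ξ‖) := by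
        rw [← mul_assoc]; gcongr
    _ ≤ d ^ s * S := by
        gcongr
        exact (pow_abs_mul_norm_fourier_le_integral_norm_iterate_pderiv' i _ hf (hint i) ξ).trans
          (hS i)

theorem integral_exp_neg_pi_mul_sq_mul_sq_norm {V : Type*} [NormedAddCommGroup V]
    [InnerProductSpace ℝ V] [FiniteDimensional ℝ V] [MeasurableSpace V] [BorelSpace V]
    {ε : ℝ} (hε : 0 < ε) :
    ∫ v : V, rexp (-π * ε ^ 2 * ‖v‖ ^ 2) = (ε ^ Module.finrank ℝ V)⁻¹ := by
  simp_rw [neg_mul π (ε ^ 2)]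
  rw [GaussianFourier.integral_rexp_neg_mul_sq_norm (by positivity),
    show π / (π * ε ^ 2) = ε⁻¹ ^ 2 by field_simp, ← Real.rpow_natCast,
    ← Real.rpow_mul (by positivity), Nat.cast_ofNat, mul_div_cancel₀ _ two_ne_zero,
    Real.rpow_natCast, inv_pow]

theorem norm_setIntegral_le_of_norm_le_gaussian {V : Type*} [NormedAddCommGroup V]
    [InnerProductSpace ℝ V] [FiniteDimensional ℝ V] [MeasurableSpace V] [BorelSpace V]
    {F : V → ℂ} {s : Set V} (hs : MeasurableSet s) {ε B : ℝ} (hε : 0 < ε) (hB : 0 ≤ B)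
    (hF : ∀ ξ ∈ s, ‖F ξ‖ ≤ rexp (-π * ε ^ 2 * ‖ξ‖ ^ 2) * B) :
    ‖∫ ξ in s, F ξ‖ ≤ B * (ε ^ Module.finrank ℝ V)⁻¹ := by
  have hint : Integrable fun ξ : V ↦ rexp (-π * ε ^ 2 * ‖ξ‖ ^ 2) * B := by
    refine Integrable.mul_const (.of_integral_ne_zero ?_) B
    rw [integral_exp_neg_pi_mul_sq_mul_sq_norm hε]
    positivity
  calc ‖∫ ξ in s, F ξ‖ ≤ ∫ ξ in s, rexp (-π * ε ^ 2 * ‖ξ‖ ^ 2) * B :=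
        norm_integral_le_of_norm_le hint.integrableOn (ae_restrict_of_forall_mem hs hF)
    _ ≤ ∫ ξ, rexp (-π * ε ^ 2 * ‖ξ‖ ^ 2) * B :=
        setIntegral_le_integral hint (.of_forall fun _ ↦ by positivity)
    _ = B * (ε ^ Module.finrank ℝ V)⁻¹ := by
        rw [integral_mul_const, integral_exp_neg_pi_mul_sq_mul_sq_norm hε, mul_comm]

theorem regScale_pos {d N : ℕ} (hd : 0 < d) (hN : 0 < N) : 0 < regScale d N :=
  lt_min (by positivity) (by positivity)

theorem inv_regScale_pow {d N : ℕ} (hd : 0 < d) (hN : 0 < N) :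
    (regScale d N ^ d)⁻¹ = max (N : ℝ) (d ^ d) := by
  have hanti : AntitoneOn (fun ε : ℝ ↦ (ε ^ d)⁻¹) (Set.Ioi 0) := fun a ha b _ hab ↦
    inv_anti₀ (pow_pos ha d) (pow_le_pow_left₀ (le_of_lt ha) hab d)
  rw [regScale, hanti.map_min (Set.mem_Ioi.2 (by positivity)) (Set.mem_Ioi.2 (by positivity))]
  congr 1
  · rw [← Real.rpow_natCast, ← Real.rpow_mul (by positivity),
      show -1 / (d : ℝ) * d = -1 by field_simp, Real.rpow_neg_one, inv_inv]
  · simp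

theorem norm_inv_natCast_mul_sum_le {𝕜 : Type*} [RCLike 𝕜] {n : ℕ} (hn : 0 < n) (a : Fin n → 𝕜)
    {B : ℝ} (ha : ∀ j, ‖a j‖ ≤ B) : ‖(n : 𝕜)⁻¹ * ∑ j, a j‖ ≤ B := by
  rw [norm_mul, norm_inv, RCLike.norm_natCast, inv_mul_le_iff₀ (by positivity)]
  simpa using norm_sum_le_of_le Finset.univ fun j _ ↦ ha j

theorem f_principle_high_frequency_general (d s : ℕ) (hd : 1 ≤ d) :
    ∃ C : ℝ, 0 < C ∧ ∀ N : ℕ, 1 ≤ N → ∀ x : Fin N → EuclideanSpace ℝ (Fin d),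
      ∀ f : EuclideanSpace ℝ (Fin d) → ℂ,
      ContDiff ℝ (2 * s) f →
      (∀ α : Fin d → ℕ, (∑ i, α i) ≤ 2 * s → Integrable (mderiv α f)) →
      ∀ η : ℝ, 0 < η →
        ‖(N : ℂ)⁻¹ * ∑ j : Fin N,
            ∫ ξ in {ξ : EuclideanSpace ℝ (Fin d) | η ≤ ‖ξ‖},
              Complex.exp ((2 * π * Complex.I) * ((inner ℝ (x j) ξ : ℝ) : ℂ)) *
                ((Real.exp (-π * regScale d N ^ 2 * ‖ξ‖ ^ 2) : ℂ) * FT f ξ)‖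
          ≤ C * (∑ α ∈ mIdx d (2 * s),
                ∫ y : EuclideanSpace ℝ (Fin d), ‖mderiv α f y‖) *
              max (N : ℝ) ((d : ℝ) ^ d) * (η ^ (2 * s))⁻¹ := by
  refine ⟨d ^ s, by positivity, fun N hN x f hf hint η hη ↦ ?_⟩
  set S := ∑ α ∈ mIdx d (2 * s), ∫ y, ‖mderiv α f y‖
  have hS : ∀ i, ∫ y, ‖(pderiv' i)^[2 * s] f y‖ ≤ S := fun i ↦ mderiv_piSingle i _ f ▸
    Finset.single_le_sum (f := fun α ↦ ∫ y, ‖mderiv α f y‖)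
      (fun α _ ↦ integral_nonneg fun y ↦ norm_nonneg _) (piSingle_mem_mIdx i _)
  have hiter : ∀ i, ∀ j ≤ 2 * s, Integrable ((pderiv' i)^[j] f) := fun i j hj ↦
    mderiv_piSingle i j f ▸ hint _ (by simpa using hj)
  have hdecay : ∀ ξ ∈ {ξ : EuclideanSpace ℝ (Fin d) | η ≤ ‖ξ‖},
      ‖FT f ξ‖ ≤ d ^ s * S * (η ^ (2 * s))⁻¹ := fun ξ hξ ↦ by
    rw [FT_eq_fourier, ← div_eq_mul_inv, le_div_iff₀ (by positivity), mul_comm]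
    exact (mul_le_mul_of_nonneg_right (pow_le_pow_left₀ hη.le hξ _) (norm_nonneg _)).trans
      (pow_norm_mul_norm_fourier_le hd (by exact_mod_cast hf) hiter hS ξ)
  refine (norm_inv_natCast_mul_sum_le (B := d ^ s * S * (η ^ (2 * s))⁻¹ * max (N : ℝ) (d ^ d))
    hN _ fun j ↦ ?_).trans_eq (by ring)
  rw [← inv_regScale_pow hd hN]
  refine (norm_setIntegral_le_of_norm_le_gaussian (B := d ^ s * S * (η ^ (2 * s))⁻¹)
    (isClosed_le continuous_const continuous_norm).measurableSet (regScale_pos hd hN)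
    (by positivity) fun ξ hξ ↦ ?_).trans_eq (by rw [finrank_euclideanSpace_fin])
  have hphase : ‖Complex.exp (2 * π * Complex.I * (inner ℝ (x j) ξ : ℝ))‖ = 1 := by
    simp [Complex.norm_exp]
  rw [norm_mul, norm_mul, hphase, Complex.norm_real,
    Real.norm_of_nonneg (Real.exp_pos _).le, one_mul]
  exact mul_le_mul_of_nonneg_left (hdecay ξ hξ) (Real.exp_pos _).le

/-- **Theorem 3.2 (F-principle in adversarial training): the high-frequency part of the
averaged loss.**  Let `d ≥ 1`, `s ≥ 1`, `N ≥ 1`, let `x_0, …, x_{N−1} ∈ ℝ^d` and let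
`f : ℝ^d → ℂ` be of class `C^{2s}` with `D^α f` integrable for all `|α| ≤ 2s`.  With
`ε = min {N^{-1/d}, 1/d}` and
`L_{≥η} = (1/N) ∑_j ∫_{‖ξ‖ ≥ η} e^{2πi x_j·ξ} e^{-π ε² ‖ξ‖²} f̂(ξ) dξ`, there is a
constant `C > 0` depending only on `d` and `s` with
`|L_{≥η}| ≤ C (∑_{|α| ≤ 2s} ‖D^α f‖_{L¹}) max {N, d^d} η^{-2s}` for all `η > 0`. -/
theorem f_principle_high_frequency (d s : ℕ) (hd : 1 ≤ d) (hs : 1 ≤ s) :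
    ∃ C : ℝ, 0 < C ∧ ∀ N : ℕ, 1 ≤ N → ∀ x : Fin N → EuclideanSpace ℝ (Fin d),
      ∀ f : EuclideanSpace ℝ (Fin d) → ℂ,
      ContDiff ℝ (2 * s) f →
      (∀ α : Fin d → ℕ, (∑ i, α i) ≤ 2 * s → Integrable (mderiv α f)) →
      ∀ η : ℝ, 0 < η →
        ‖(N : ℂ)⁻¹ * ∑ j : Fin N,
            ∫ ξ in {ξ : EuclideanSpace ℝ (Fin d) | η ≤ ‖ξ‖},
              Complex.exp ((2 * π * Complex.I) * ((inner ℝ (x j) ξ : ℝ) : ℂ)) *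
                ((Real.exp (-π * regScale d N ^ 2 * ‖ξ‖ ^ 2) : ℂ) * FT f ξ)‖
          ≤ C * (∑ α ∈ mIdx d (2 * s),
                ∫ y : EuclideanSpace ℝ (Fin d), ‖mderiv α f y‖) *
              max (N : ℝ) ((d : ℝ) ^ d) * (η ^ (2 * s))⁻¹ :=
  f_principle_high_frequency_general d s hd
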